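/- Let S = ∏_{j=1}^n [c_j, c_j + Δ_j] ⊂ ℝⁿ be a rectangular cell with edge lengths Δ_j > 0, and let g : S → ℝ be continuously differentiable on S with |∂g/∂x_j (x)| ≥ a_j for every x ∈ S and every j ∈ {1,…,n}, where a_j ≥ 0. If X is uniformly distributed on S, then Var(g(X)) ≥ ∑_{j=1}^n a_j²·Δ_j²/12. -/

import Mathlib

/-!
Write `m j` for the midpoint of the `j`-th edge. Under the uniform distribution the centred
coordinates `x j - m j` have mean zero, are pairwise orthogonal in `L²` and have second moment
`Δ j ^ 2 / 12`, so Bessel's inequality bounds `Var g` below by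
`∑ j, (∫ (x j - m j) * g x) ^ 2 / (Δ j ^ 2 / 12)`. Since `∂g/∂x_j` is continuous on the connected
cell and bounded away from zero, it has a constant sign, say `∂g/∂x_j ≥ a j`. Then `g - a j * x j`
is nondecreasing in `x j`, and averaging over each point and its mirror image in the hyperplane
`x j = m j` (a symmetry of the uniform distribution, which also gives the orthogonality) yields
`∫ (x j - m j) * g x ≥ a j * Δ j ^ 2 / 12`.
-/

open MeasureTheory ProbabilityTheory Set

section Bessel

variable {Ω ι : Type*} [MeasurableSpace Ω] {μ : Measure Ω} [Fintype ι] [DecidableEq ι]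
  {e : ι → Ω → ℝ} {f : Ω → ℝ}

theorem MeasureTheory.MemLp.inner_toLp_eq_integral {φ ψ : Ω → ℝ} (hφ : MemLp φ 2 μ)
    (hψ : MemLp ψ 2 μ) : inner ℝ (hφ.toLp φ) (hψ.toLp ψ) = ∫ ω, φ ω * ψ ω ∂μ := by
  rw [L2.inner_def]
  refine integral_congr_ae ?_
  filter_upwards [hφ.coeFn_toLp, hψ.coeFn_toLp] with ω hφω hψω
  simp [hφω, hψω, mul_comm]

theorem sum_sq_integral_mul_le_integral_sq (he : ∀ i, MemLp (e i) 2 μ)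
    (horth : ∀ i j, ∫ ω, e i ω * e j ω ∂μ = if i = j then 1 else 0) (hf : MemLp f 2 μ) :
    ∑ i, (∫ ω, e i ω * f ω ∂μ) ^ 2 ≤ ∫ ω, f ω ^ 2 ∂μ := by
  have hON : Orthonormal ℝ fun i => (he i).toLp (e i) := by
    rw [orthonormal_iff_ite]
    intro i j
    rw [MemLp.inner_toLp_eq_integral, horth]
  have hBessel := hON.sum_inner_products_le (hf.toLp f) (s := Finset.univ)
  simp only [MemLp.inner_toLp_eq_integral, Real.norm_eq_abs, sq_abs] at hBessel
  simpa only [← real_inner_self_eq_norm_sq, MemLp.inner_toLp_eq_integral, ← sq] using hBessel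

theorem sum_sq_integral_mul_div_le_variance [IsProbabilityMeasure μ]
    (he : ∀ i, MemLp (e i) 2 μ) (horth : Pairwise fun i j => ∫ ω, e i ω * e j ω ∂μ = 0)
    (hnorm : ∀ i, ∫ ω, e i ω ^ 2 ∂μ ≠ 0) (hcentred : ∀ i, ∫ ω, e i ω ∂μ = 0)
    (hf : MemLp f 2 μ) :
    ∑ i, (∫ ω, e i ω * f ω ∂μ) ^ 2 / ∫ ω, e i ω ^ 2 ∂μ ≤ variance f μ := by
  set s : ι → ℝ := fun i => √(∫ ω, e i ω ^ 2 ∂μ)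
  have hs : ∀ i, s i ^ 2 = ∫ ω, e i ω ^ 2 ∂μ := fun i =>
    Real.sq_sqrt (integral_nonneg fun ω => sq_nonneg (e i ω))
  have hortho : ∀ i j, ∫ ω, e i ω / s i * (e j ω / s j) ∂μ = if i = j then 1 else 0 := by
    intro i j
    simp only [div_mul_div_comm, integral_div]
    split_ifs with h
    · rw [h]
      simp only [← sq, hs]
      exact div_self (hnorm j)
    · rw [horth h, zero_div]
  have hcov : ∀ i, ∫ ω, e i ω / s i * (f ω - μ[f]) ∂μ = (∫ ω, e i ω * f ω ∂μ) / s i := by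
    intro i
    have hint : Integrable (fun ω => e i ω * f ω) μ := (he i).integrable_mul hf
    calc ∫ ω, e i ω / s i * (f ω - μ[f]) ∂μ = (∫ ω, e i ω * f ω - μ[f] * e i ω ∂μ) / s i := by
          rw [← integral_div]
          congr 1 with ω
          ring
      _ = _ := by
          rw [integral_sub hint (((he i).integrable one_le_two).const_mul _), integral_const_mul,
            hcentred, mul_zero, sub_zero]
  have hBessel := sum_sq_integral_mul_le_integral_sq
    (fun i => by simpa only [div_eq_mul_inv] using (he i).mul_const (s i)⁻¹) hortho
    (hf.sub (memLp_const μ[f]))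
  rw [variance_eq_integral hf.aestronglyMeasurable.aemeasurable]
  simpa only [Pi.sub_apply, hcov, div_pow, hs] using hBessel

end Bessel

section Reflection

variable {Ω : Type*} [MeasurableSpace Ω] {μ : Measure Ω} {R : Ω → Ω} {F : Ω → ℝ}

theorem MeasureTheory.MeasurePreserving.integral_comp_of_aestronglyMeasurable
    (hR : MeasurePreserving R μ μ) (hF : AEStronglyMeasurable F μ) :
    ∫ ω, F (R ω) ∂μ = ∫ ω, F ω ∂μ := by
  rw [← hR.map_eq] at hF
  rw [← integral_map hR.aemeasurable hF, hR.map_eq]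

theorem integral_eq_zero_of_comp_eq_neg (hR : MeasurePreserving R μ μ)
    (hF : AEStronglyMeasurable F μ) (hodd : ∀ ω, F (R ω) = -F ω) : ∫ ω, F ω ∂μ = 0 := by
  have h := hR.integral_comp_of_aestronglyMeasurable hF
  simp only [hodd, integral_neg] at h
  linarith

theorem integral_nonneg_of_add_comp_nonneg (hR : MeasurePreserving R μ μ) (hF : Integrable F μ)
    (h : ∀ᵐ ω ∂μ, 0 ≤ F ω + F (R ω)) : 0 ≤ ∫ ω, F ω ∂μ := by
  have hFR : Integrable (fun ω => F (R ω)) μ := hR.integrable_comp_of_integrable hF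
  have hsum := integral_nonneg_of_ae h
  rw [integral_add hF hFR,
    hR.integral_comp_of_aestronglyMeasurable hF.aestronglyMeasurable] at hsum
  linarith

end Reflection

theorem MeasureTheory.MeasurePreserving.cond {α β : Type*} [MeasurableSpace α] [MeasurableSpace β]
    {μ : Measure α} {ν : Measure β} {f : α → β} (hf : MeasurePreserving f μ ν) {s : Set β}
    (hs : MeasurableSet s) : MeasurePreserving f μ[|f ⁻¹' s] ν[|s] := by
  unfold ProbabilityTheory.cond
  rw [hf.measure_preimage hs.nullMeasurableSet]
  exact (hf.restrict_preimage hs).smul_measure _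

theorem ProbabilityTheory.cond_pi_univ_pi {ι : Type*} [Fintype ι] {α : ι → Type*}
    [∀ i, MeasurableSpace (α i)] (μ : ∀ i, Measure (α i)) [∀ i, SigmaFinite (μ i)]
    {s : ∀ i, Set (α i)} (hs : ∀ i, MeasurableSet (s i)) (hfin : ∀ i, μ i (s i) ≠ ⊤) :
    (Measure.pi μ)[|univ.pi s] = Measure.pi fun i => (μ i)[|s i] := by
  refine (Measure.pi_eq fun t ht => ?_).symm
  simp only [cond_apply (MeasurableSet.univ_pi hs), cond_apply (hs _), Measure.pi_pi,
    ← pi_inter_distrib, Finset.prod_mul_distrib]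
  rw [ENNReal.prod_inv_distrib fun i _ _ _ _ => Or.inr (hfin _)]

theorem measurePreserving_add_sub_cond_Icc (a b : ℝ) :
    MeasurePreserving (fun t => a + b - t) volume[|Icc a b] volume[|Icc a b] := by
  simpa using
    (Measure.measurePreserving_sub_left volume (a + b)).cond (s := Icc a b) measurableSet_Icc

theorem integral_sq_sub_midpoint_cond_Icc {a b : ℝ} (hab : a < b) :
    ∫ t, (t - (a + b) / 2) ^ 2 ∂volume[|Icc a b] = (b - a) ^ 2 / 12 := by
  rw [ProbabilityTheory.cond, integral_smul_measure, Real.volume_Icc, ENNReal.toReal_inv,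
    ENNReal.toReal_ofReal (sub_pos.2 hab).le, integral_Icc_eq_integral_Ioc,
    ← intervalIntegral.integral_of_le hab.le, intervalIntegral.integral_comp_sub_right (· ^ 2),
    integral_pow, smul_eq_mul]
  field_simp [(sub_pos.2 hab).ne']
  ring

theorem ContinuousOn.memLp_cond {α E : Type*} [MeasurableSpace α] [TopologicalSpace α]
    [OpensMeasurableSpace α] [NormedAddCommGroup E]
    [SecondCountableTopologyEither α E] {μ : Measure α} {s : Set α} {f : α → E}
    (hf : ContinuousOn f s) (hs : IsCompact s) (hsm : MeasurableSet s) (p : ENNReal) :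
    MemLp f p μ[|s] := by
  obtain ⟨C, hC⟩ := hs.exists_bound_of_continuousOn hf
  refine MemLp.of_bound ?_ C (ae_cond_of_forall_mem hsm hC)
  exact (hf.aestronglyMeasurable hsm).smul_measure _

theorem isProbabilityMeasure_cond_Icc {a b : ℝ} (hab : a < b) :
    IsProbabilityMeasure volume[|Icc a b] :=
  cond_isProbabilityMeasure_of_finite (by simp [hab]) measure_Icc_lt_top.ne

theorem IsPreconnected.forall_le_or_forall_le_neg {X : Type*} [TopologicalSpace X] {s : Set X}
    (hs : IsPreconnected s) {f : X → ℝ} (hf : ContinuousOn f s) {a : ℝ} (ha : 0 < a)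
    (hfa : ∀ x ∈ s, a ≤ |f x|) : (∀ x ∈ s, a ≤ f x) ∨ (∀ x ∈ s, a ≤ -f x) := by
  by_contra! ⟨⟨x, hx, hfx⟩, ⟨y, hy, hfy⟩⟩
  have hfx : f x < 0 := by cases abs_cases (f x) <;> linarith [hfa x hx]
  have hfy : 0 < f y := by cases abs_cases (f y) <;> linarith [hfa y hy]
  obtain ⟨z, hz, hfz⟩ := hs.intermediate_value hx hy hf ⟨hfx.le, hfy.le⟩
  linarith [hfa z hz, abs_eq_zero.2 hfz]

section Box

open Function

variable {ι : Type*} [Fintype ι] {l u : ι → ℝ}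

theorem volume_cond_Icc_pi :
    (volume : Measure (ι → ℝ))[|Icc l u] = Measure.pi fun i => volume[|Icc (l i) (u i)] := by
  rw [← pi_univ_Icc, volume_pi]
  exact cond_pi_univ_pi _ (fun _ => measurableSet_Icc) fun _ => measure_Icc_lt_top.ne

theorem integral_sq_sub_midpoint_cond_Icc_pi (hlu : ∀ i, l i < u i) (j : ι) :
    ∫ x, (x j - (l j + u j) / 2) ^ 2 ∂volume[|Icc l u] = (u j - l j) ^ 2 / 12 := by
  have := fun i => isProbabilityMeasure_cond_Icc (hlu i)
  rw [volume_cond_Icc_pi, ← integral_sq_sub_midpoint_cond_Icc (hlu j)]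
  exact integral_comp_eval (X := fun _ => ℝ) (i := j) (f := fun t => (t - (l j + u j) / 2) ^ 2)
    (Measurable.aestronglyMeasurable (by fun_prop))

variable [DecidableEq ι]

def reflectCoord (j : ι) (c : ℝ) (x : ι → ℝ) : ι → ℝ :=
  update x j (c - x j)

theorem measurePreserving_reflectCoord_cond_Icc (j : ι) :
    MeasurePreserving (reflectCoord j (l j + u j)) volume[|Icc l u] volume[|Icc l u] := by
  have hpi : reflectCoord j (l j + u j) =
      fun x i => (if i = j then (l i + u i - ·) else id) (x i) := by
    funext x i
    by_cases h : i = j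
    · subst h; simp [reflectCoord]
    · simp [reflectCoord, h]
  rw [volume_cond_Icc_pi, hpi]
  exact measurePreserving_pi _ _ fun i => by
    split_ifs
    exacts [measurePreserving_add_sub_cond_Icc _ _, .id _]

theorem integral_sub_midpoint_cond_Icc_pi (j : ι) :
    ∫ x, (x j - (l j + u j) / 2) ∂volume[|Icc l u] = 0 :=
  integral_eq_zero_of_comp_eq_neg (measurePreserving_reflectCoord_cond_Icc j)
    (Measurable.aestronglyMeasurable (by fun_prop)) fun x => by
      simp only [reflectCoord, update_self]
      ring

theorem integral_mul_sub_midpoint_cond_Icc_pi {i j : ι} (hij : i ≠ j) :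
    ∫ x, (x i - (l i + u i) / 2) * (x j - (l j + u j) / 2) ∂volume[|Icc l u] = 0 :=
  integral_eq_zero_of_comp_eq_neg (measurePreserving_reflectCoord_cond_Icc j)
    (Measurable.aestronglyMeasurable (by fun_prop)) fun x => by
      simp only [reflectCoord, update_of_ne hij, update_self]
      ring

variable {g : (ι → ℝ) → ℝ} {g' : (ι → ℝ) → (ι → ℝ) →L[ℝ] ℝ} {j : ι}

theorem mul_integral_sq_sub_midpoint_le_integral_mul {a : ℝ} (hg : MemLp g 2 volume[|Icc l u])
    (hmono : ∀ x ∈ Icc l u, MonotoneOn (fun t => g (update x j t) - a * t) (Icc (l j) (u j))) :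
    a * ∫ x, (x j - (l j + u j) / 2) ^ 2 ∂volume[|Icc l u] ≤
      ∫ x, (x j - (l j + u j) / 2) * g x ∂volume[|Icc l u] := by
  set m := (l j + u j) / 2
  have he : MemLp (fun x : ι → ℝ => x j - m) 2 volume[|Icc l u] :=
    (by fun_prop : Continuous fun x : ι → ℝ => x j - m).continuousOn.memLp_cond isCompact_Icc
      measurableSet_Icc 2
  have heg : Integrable (fun x => (x j - m) * g x) volume[|Icc l u] := he.integrable_mul hg
  have hF : Integrable (fun x => (x j - m) * (g x - a * (x j - m))) volume[|Icc l u] :=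
    he.integrable_mul (hg.sub (he.const_mul a))
  have hmirror : ∀ x ∈ Icc l u, 0 ≤ (x j - m) * (g x - a * (x j - m)) +
      (reflectCoord j (l j + u j) x j - m) *
        (g (reflectCoord j (l j + u j) x) - a * (reflectCoord j (l j + u j) x j - m)) := by
    intro x hx
    have hxj : x j ∈ Icc (l j) (u j) := ⟨hx.1 j, hx.2 j⟩
    have hx'j : l j + u j - x j ∈ Icc (l j) (u j) := ⟨by linarith [hxj.2], by linarith [hxj.1]⟩
    have h := (monovaryOn_id_iff.2 (hmono x hx)).sub_mul_sub_nonneg hxj hx'j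
    simp only [update_eq_self, id] at h
    simp only [reflectCoord, update_self]
    linear_combination h / 2
  have hsum := integral_nonneg_of_add_comp_nonneg (measurePreserving_reflectCoord_cond_Icc j) hF
    (ae_cond_of_forall_mem measurableSet_Icc hmirror)
  rw [← integral_const_mul, ← sub_nonneg, ← integral_sub heg (he.integrable_sq.const_mul a)]
  convert hsum using 3
  ring

theorem monotoneOn_update_sub_mul_of_le_fderiv {a : ℝ}
    (hg : ∀ x ∈ Icc l u, HasFDerivWithinAt g (g' x) (Icc l u) x)
    (ha : ∀ x ∈ Icc l u, a ≤ g' x (Pi.single j 1)) {x : ι → ℝ} (hx : x ∈ Icc l u) :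
    MonotoneOn (fun t => g (update x j t) - a * t) (Icc (l j) (u j)) := by
  have hmaps : MapsTo (update x j) (Icc (l j) (u j)) (Icc l u) := fun t ht => by
    rw [← pi_univ_Icc] at hx ⊢
    exact (update_mem_pi_iff_of_mem hx).2 fun _ => ht
  have hderiv : ∀ t ∈ Icc (l j) (u j), HasDerivWithinAt (fun t => g (update x j t) - a * t)
      (g' (update x j t) (Pi.single j 1) - a) (Icc (l j) (u j)) t := fun t ht => by
    have h := ((hg _ (hmaps ht)).comp_hasDerivWithinAt t
      (hasDerivAt_update x j t).hasDerivWithinAt hmaps).sub ((hasDerivWithinAt_id t _).const_mul a)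
    rwa [mul_one] at h
  refine monotoneOn_of_hasDerivWithinAt_nonneg (convex_Icc _ _)
    (fun t ht => (hderiv t ht).continuousWithinAt)
    (fun t ht => (hderiv t (interior_subset ht)).mono interior_subset) fun t ht => ?_
  exact sub_nonneg.2 (ha _ (hmaps (interior_subset ht)))

theorem mul_integral_sq_sub_midpoint_le_abs_integral_mul {a : ℝ}
    (hg : ∀ x ∈ Icc l u, HasFDerivWithinAt g (g' x) (Icc l u) x) (hg'c : ContinuousOn g' (Icc l u))
    (ha0 : 0 ≤ a) (ha : ∀ x ∈ Icc l u, a ≤ |g' x (Pi.single j 1)|) :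
    a * ∫ x, (x j - (l j + u j) / 2) ^ 2 ∂volume[|Icc l u] ≤
      |∫ x, (x j - (l j + u j) / 2) * g x ∂volume[|Icc l u]| := by
  have hgLp : MemLp g 2 volume[|Icc l u] :=
    ContinuousOn.memLp_cond (fun x hx => (hg x hx).continuousWithinAt) isCompact_Icc
      measurableSet_Icc 2
  rcases ha0.eq_or_lt with rfl | hpos
  · simp
  rcases (convex_Icc l u).isPreconnected.forall_le_or_forall_le_neg
    (hg'c.clm_apply continuousOn_const) hpos ha with hpos | hneg
  · exact (mul_integral_sq_sub_midpoint_le_integral_mul hgLp fun x hx =>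
      monotoneOn_update_sub_mul_of_le_fderiv hg hpos hx).trans (le_abs_self _)
  · have h := mul_integral_sq_sub_midpoint_le_integral_mul hgLp.neg fun x hx =>
      monotoneOn_update_sub_mul_of_le_fderiv (g' := -g') (fun x hx => (hg x hx).neg) hneg hx
    simp only [Pi.neg_apply, mul_neg, integral_neg] at h
    exact h.trans (neg_le_abs _)

theorem sum_sq_mul_sq_div_twelve_le_variance_cond_Icc {a : ι → ℝ} (hlu : ∀ j, l j < u j)
    (hg : ∀ x ∈ Icc l u, HasFDerivWithinAt g (g' x) (Icc l u) x) (hg'c : ContinuousOn g' (Icc l u))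
    (ha0 : ∀ j, 0 ≤ a j) (ha : ∀ j, ∀ x ∈ Icc l u, a j ≤ |g' x (Pi.single j 1)|) :
    ∑ j, a j ^ 2 * (u j - l j) ^ 2 / 12 ≤ variance g volume[|Icc l u] := by
  have := fun i => isProbabilityMeasure_cond_Icc (hlu i)
  have : IsProbabilityMeasure (volume[|Icc l u] : Measure (ι → ℝ)) := by
    rw [volume_cond_Icc_pi]
    infer_instance
  have hsq : ∀ j, 0 < (u j - l j) ^ 2 / 12 := fun j => by
    have := sub_pos.2 (hlu j)
    positivity
  refine (Finset.sum_le_sum fun j _ => ?_).trans <| sum_sq_integral_mul_div_le_variance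
    (fun j => (by fun_prop : Continuous fun x : ι → ℝ => x j - (l j + u j) / 2).continuousOn
      |>.memLp_cond isCompact_Icc measurableSet_Icc 2)
    (fun i j hij => integral_mul_sub_midpoint_cond_Icc_pi hij)
    (fun j => by rw [integral_sq_sub_midpoint_cond_Icc_pi hlu]; exact (hsq j).ne')
    integral_sub_midpoint_cond_Icc_pi
    (ContinuousOn.memLp_cond (fun x hx => (hg x hx).continuousWithinAt) isCompact_Icc
      measurableSet_Icc 2)
  have hj := mul_integral_sq_sub_midpoint_le_abs_integral_mul hg hg'c (ha0 j) (ha j)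
  rw [integral_sq_sub_midpoint_cond_Icc_pi hlu] at hj
  rw [integral_sq_sub_midpoint_cond_Icc_pi hlu, le_div_iff₀ (hsq j)]
  calc a j ^ 2 * (u j - l j) ^ 2 / 12 * ((u j - l j) ^ 2 / 12)
      = (a j * ((u j - l j) ^ 2 / 12)) ^ 2 := by ring
    _ ≤ |∫ x, (x j - (l j + u j) / 2) * g x ∂volume[|Icc l u]| ^ 2 :=
        pow_le_pow_left₀ (mul_nonneg (ha0 j) (hsq j).le) hj 2
    _ = _ := sq_abs _

end Box

/-- Lower bound of Lemma 10: if `g` is continuously differentiable on a rectangular cell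
`S` with `|∂g/∂x_j| ≥ a_j` everywhere on `S`, and `X` is uniformly distributed on `S`,
then `Var(g(X)) ≥ ∑ a_j² Δ_j² / 12`. -/
theorem variance_uniform_cell_lower (n : ℕ) (c Δ : Fin n → ℝ) (hΔ : ∀ j, 0 < Δ j)
    (S : Set (Fin n → ℝ)) (hS : S = Set.univ.pi fun j => Set.Icc (c j) (c j + Δ j))
    (g : (Fin n → ℝ) → ℝ) (g' : (Fin n → ℝ) → (Fin n → ℝ) →L[ℝ] ℝ)
    (hg : ∀ x ∈ S, HasFDerivWithinAt g (g' x) S x)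
    (hg'c : ContinuousOn g' S)
    (a : Fin n → ℝ) (ha0 : ∀ j, 0 ≤ a j)
    (ha : ∀ j : Fin n, ∀ x ∈ S, a j ≤ |g' x (Pi.single j 1)|)
    (μ : Measure (Fin n → ℝ)) (hμ : μ = (volume S)⁻¹ • volume.restrict S) :
    (∑ j, a j ^ 2 * Δ j ^ 2 / 12) ≤ variance g μ := by
  have hSIcc : S = Icc c (c + Δ) := hS.trans (pi_univ_Icc c (c + Δ))
  subst hSIcc hμ
  have h := sum_sq_mul_sq_div_twelve_le_variance_cond_Icc (fun j => by simp [hΔ j]) hg hg'c ha0 ha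
  simp only [Pi.add_apply, add_sub_cancel_left] at h
  exact h
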